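/- Let π be a probability measure (the prior) on a parameter space Θ, let ℓ : Θ × X → ℝ be measurable with |ℓ(θ,x)| ≤ B for all θ, x, and for a dataset S = (x_1,…,x_m) ∈ X^m define the posterior-sampling mechanism A(S) as the probability measure with density proportional to exp(−∑_{i=1}^m ℓ(θ, x_i)) with respect to π (assuming the normalizing constant is finite and positive for every S). Then A is 4B-differentially private: for all adjacent datasets S, S' and all measurable O ⊆ Θ, A(S)(O) ≤ e^{4B} · A(S')(O). -/

import Mathlib

open MeasureTheory Real

/-- Two datasets of size `m` are adjacent if they differ in at most one entry. -/
def Adjacent {X : Type*} {m : ℕ} (S S' : Fin m → X) : Prop :=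
  ∃ i : Fin m, ∀ j : Fin m, j ≠ i → S j = S' j

/-- The Gibbs posterior-sampling mechanism: given a prior `μ₀` and a loss `ℓ`, the
output distribution on a dataset `S` has density proportional to
`exp(−∑ᵢ ℓ(θ, xᵢ))` with respect to `μ₀`. -/
noncomputable def posteriorMechanism {X Θ : Type*} [MeasurableSpace X]
    [MeasurableSpace Θ] (μ₀ : Measure Θ) {m : ℕ} (ℓ : Θ → X → ℝ)
    (S : Fin m → X) : Measure Θ :=
  μ₀.withDensity fun θ => ENNReal.ofReal
    (exp (-∑ i : Fin m, ℓ θ (S i)) / ∫ θ', exp (-∑ i : Fin m, ℓ θ' (S i)) ∂μ₀)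

/-!
Replacing one entry of the dataset changes the potential `∑ᵢ ℓ(θ, xᵢ)` by at most `2B`, so
the unnormalised Gibbs weights of adjacent datasets agree up to a factor `e^{2B}` pointwise,
and hence so do their normalising constants. The two factors combine to `e^{4B}` between the
posterior densities, and integrating over `O` gives the privacy bound.
-/

namespace Adjacent

variable {X : Type*} {m : ℕ} {S S' : Fin m → X}

theorem symm (h : Adjacent S S') : Adjacent S' S :=
  let ⟨i, hi⟩ := h
  ⟨i, fun j hj => (hi j hj).symm⟩

theorem exists_sum_sub_sum_eq {M : Type*} [AddCommGroup M] (h : Adjacent S S') (f : X → M) :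
    ∃ i, ∑ j, f (S j) - ∑ j, f (S' j) = f (S i) - f (S' i) := by
  obtain ⟨i, hi⟩ := h
  refine ⟨i, ?_⟩
  rw [← Finset.sum_sub_distrib, Finset.sum_eq_single i]
  · intro j _ hj
    rw [hi j hj, sub_self]
  · simp

theorem exp_neg_sum_le (h : Adjacent S S') {f : X → ℝ} {B : ℝ} (hf : ∀ x, |f x| ≤ B) :
    exp (-∑ j, f (S j)) ≤ exp (2 * B) * exp (-∑ j, f (S' j)) := by
  obtain ⟨i, hi⟩ := h.exists_sum_sub_sum_eq f
  have hS : -f (S i) ≤ B := (neg_le_abs _).trans (hf _)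
  have hS' : f (S' i) ≤ B := (le_abs_self _).trans (hf _)
  rw [← exp_add]
  exact exp_le_exp.2 (by linarith)

end Adjacent

theorem div_integral_le_sq_mul_div_integral {Θ : Type*} [MeasurableSpace Θ] {μ : Measure Θ}
    {f g : Θ → ℝ} {c : ℝ} (hc : 0 ≤ c) (hg : ∀ θ, 0 ≤ g θ)
    (hfg : ∀ θ, f θ ≤ c * g θ) (hgf : ∀ θ, g θ ≤ c * f θ)
    (hZf : 0 < ∫ θ, f θ ∂μ) (hZg : 0 < ∫ θ, g θ ∂μ) (θ : Θ) :
    f θ / ∫ θ', f θ' ∂μ ≤ c ^ 2 * (g θ / ∫ θ', g θ' ∂μ) := by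
  have hZ : ∫ θ', g θ' ∂μ ≤ c * ∫ θ', f θ' ∂μ := by
    -- a non-integrable function has integral `0`, so positive integrals force integrability
    rw [← integral_const_mul]
    exact integral_mono (Integrable.of_integral_ne_zero hZg.ne')
      ((Integrable.of_integral_ne_zero hZf.ne').const_mul c) hgf
  rw [mul_div_assoc', div_le_div_iff₀ hZf hZg]
  calc f θ * ∫ θ', g θ' ∂μ ≤ c * g θ * (c * ∫ θ', f θ' ∂μ) :=
        mul_le_mul (hfg θ) hZ hZg.le (mul_nonneg hc (hg θ))
    _ = c ^ 2 * g θ * ∫ θ', f θ' ∂μ := by ring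

theorem withDensity_ofReal_le_smul {Θ : Type*} [MeasurableSpace Θ] {μ : Measure Θ}
    {f g : Θ → ℝ} {C : ℝ} (hC : 0 ≤ C) (h : ∀ θ, f θ ≤ C * g θ) :
    μ.withDensity (fun θ => ENNReal.ofReal (f θ)) ≤
      ENNReal.ofReal C • μ.withDensity (fun θ => ENNReal.ofReal (g θ)) := by
  rw [← withDensity_smul' _ _ ENNReal.ofReal_ne_top]
  refine withDensity_mono (ae_of_all _ fun θ => ?_)
  simp only [Pi.smul_apply, smul_eq_mul, ← ENNReal.ofReal_mul hC]
  exact ENNReal.ofReal_le_ofReal (h θ)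

theorem posterior_sampling_is_dp_general {X Θ : Type*} [MeasurableSpace X] [MeasurableSpace Θ]
    (μ₀ : Measure Θ) {m : ℕ}
    (ℓ : Θ → X → ℝ)
    (B : ℝ) (hbd : ∀ θ x, |ℓ θ x| ≤ B)
    (hZ : ∀ S : Fin m → X,
      0 < ∫ θ, exp (-∑ i : Fin m, ℓ θ (S i)) ∂μ₀) :
    ∀ S S' : Fin m → X, Adjacent S S' → ∀ O : Set Θ, MeasurableSet O →
      posteriorMechanism μ₀ ℓ S O ≤
        ENNReal.ofReal (exp (4 * B)) * posteriorMechanism μ₀ ℓ S' O := by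
  intro S S' hS O _
  have hdens := div_integral_le_sq_mul_div_integral (exp_pos (2 * B)).le
    (fun θ => (exp_pos _).le) (fun θ => hS.exp_neg_sum_le (hbd θ))
    (fun θ => hS.symm.exp_neg_sum_le (hbd θ)) (hZ S) (hZ S')
  have hsq : exp (2 * B) ^ 2 = exp (4 * B) := by
    rw [← exp_nat_mul]
    ring_nf
  rw [hsq] at hdens
  exact withDensity_ofReal_le_smul (exp_pos _).le hdens O

/-- one-posterior-sample privacy, Wang et al., used by the paper for
the Bayesian GAN: if `|ℓ(θ,x)| ≤ B` and the normalizing constant of the Gibbs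
posterior is finite and positive for every dataset, then sampling once from the
posterior is `4B`-differentially private. -/
theorem posterior_sampling_is_dp {X Θ : Type*} [MeasurableSpace X] [MeasurableSpace Θ]
    (μ₀ : Measure Θ) [IsProbabilityMeasure μ₀] {m : ℕ}
    (ℓ : Θ → X → ℝ) (hmeas : Measurable (Function.uncurry ℓ))
    (B : ℝ) (hbd : ∀ θ x, |ℓ θ x| ≤ B)
    (hZ : ∀ S : Fin m → X,
      0 < ∫ θ, exp (-∑ i : Fin m, ℓ θ (S i)) ∂μ₀) :
    ∀ S S' : Fin m → X, Adjacent S S' → ∀ O : Set Θ, MeasurableSet O →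
      posteriorMechanism μ₀ ℓ S O ≤
        ENNReal.ofReal (exp (4 * B)) * posteriorMechanism μ₀ ℓ S' O :=
  posterior_sampling_is_dp_general μ₀ ℓ B hbd hZ
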